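/- The Kulkarni group K_g = ⟨a,b | a^{2g+2} = b^4 = (ab)^2 = 1, b^2 a b^2 = a^{g+2}⟩ has order 8g+8 for every g ≡ 3 (mod 4). -/

import Mathlib

/-- The relators of the Kulkarni group
`K_g = ⟨a, b | a^(2g+2) = b^4 = (ab)^2 = 1, b²ab² = a^(g+2)⟩`,
as elements of the free group on two generators (`0` is `a`, `1` is `b`). -/
def kRels (g : ℕ) : Set (FreeGroup (Fin 2)) :=
  { (FreeGroup.of 0) ^ (2 * g + 2),
    (FreeGroup.of 1) ^ 4,
    (FreeGroup.of 0 * FreeGroup.of 1) ^ 2,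
    (FreeGroup.of 1) ^ 2 * FreeGroup.of 0 * (FreeGroup.of 1) ^ 2 *
      ((FreeGroup.of 0) ^ (g + 2))⁻¹ }

/-!
Write `g = 4k + 3` and `n = 2g + 2 = 8k + 8`. The relations give `a * b ^ j = b ^ (-j) * a ^ s_j`
for explicit exponents `s_j`, so every element of `K_g` is a word `b ^ j * a ^ i` with
`(j, i) ∈ ℤ/4 × ℤ/n`. Conversely, the formulas for left multiplication by `a` and `b` on these
words define permutations of `ℤ/4 × ℤ/n` satisfying the defining relations, so `K_g` acts on
`ℤ/4 × ℤ/n`, and the orbit map of `(0, 0)` inverts the normal form map. Since `8 ∣ n`,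
`a ^ (g + 1)` acts as the translation `i ↦ i + g + 1`, which yields the relation
`b²ab² = a^(g+2)`.
-/

section NormalForm

variable {G X : Type*} [Group G]

theorem equivariant_of_closure_eq_top (φ : G →* Equiv.Perm X) (F : X → G) {s : Set G}
    (hs : Subgroup.closure s = ⊤) (hF : ∀ g ∈ s, ∀ p, F (φ g p) = g * F p) (g : G) (p : X) :
    F (φ g p) = g * F p := by
  have hg : g ∈ Subgroup.closure s := hs ▸ Subgroup.mem_top g
  induction hg using Subgroup.closure_induction generalizing p with
  | mem g hg => exact hF g hg p
  | one => simp
  | mul g h _ _ ihg ihh => rw [map_mul, Equiv.Perm.mul_apply, ihg, ihh, mul_assoc]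
  | inv g _ ih => rw [eq_inv_mul_iff_mul_eq, ← ih, ← Equiv.Perm.mul_apply, ← map_mul,
      mul_inv_cancel, map_one, Equiv.Perm.one_apply]

theorem card_eq_card_of_normalForm (φ : G →* Equiv.Perm X) (F : X → G) {s : Set G}
    (hs : Subgroup.closure s = ⊤) (hF : ∀ g ∈ s, ∀ p, F (φ g p) = g * F p) (p₀ : X)
    (hF₀ : F p₀ = 1) (hφF : ∀ p, φ (F p) p₀ = p) : Nat.card G = Nat.card X :=
  Nat.card_congr
    { toFun := fun g => φ g p₀
      invFun := F
      left_inv := fun g => by rw [equivariant_of_closure_eq_top φ F hs hF, hF₀, mul_one]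
      right_inv := hφF }

end NormalForm

theorem pow_val_natCast_add {M : Type*} [Monoid M] {n : ℕ} [NeZero n] {x : M} (hx : x ^ n = 1)
    (e : ℕ) (i : ZMod n) : x ^ ((e : ZMod n) + i).val = x ^ e * x ^ i.val := by
  rw [ZMod.val_add, ← pow_eq_pow_mod _ hx, pow_add, ZMod.val_natCast, ← pow_eq_pow_mod _ hx]

namespace Kulkarni

instance (k : ℕ) : NeZero (8 * k + 8) := ⟨by omega⟩

theorem natCast_self (k : ℕ) : (8 * k + 8 : ZMod (8 * k + 8)) = 0 := by
  exact_mod_cast ZMod.natCast_self (8 * k + 8)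

/-- `a * b ^ j = b ^ (-j) * a ^ aShift k j` in `K_{4k+3}`. -/
def aShift (k : ℕ) : Fin 4 → ℕ := ![1, 8 * k + 7, 4 * k + 5, 4 * k + 3]

theorem aShift_add_one_add_aShift_neg (k : ℕ) (j : Fin 4) :
    (aShift k (j + 1) : ZMod (8 * k + 8)) + aShift k (-j) = 0 := by
  fin_cases j <;> simp [aShift, Fin.neg_def] <;> grind [natCast_self]

theorem aShift_add_two (k : ℕ) (j : Fin 4) :
    (aShift k (j + 2) : ZMod (8 * k + 8)) = aShift k j + (4 * k + 4) := by
  fin_cases j <;> simp [aShift] <;> grind [natCast_self]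

theorem two_mul_aShift_add_aShift_neg (k : ℕ) (j : Fin 4) :
    (2 * k + 2) * ((aShift k j : ZMod (8 * k + 8)) + aShift k (-j)) = 4 * k + 4 := by
  fin_cases j <;> simp [aShift, Fin.neg_def] <;> grind [natCast_self]

abbrev Point (k : ℕ) := Fin 4 × ZMod (8 * k + 8)

/-- Left multiplication by `a` on the normal forms `b ^ j * a ^ i`, in the coordinates `(j, i)`. -/
def permA (k : ℕ) : Equiv.Perm (Point k) where
  toFun p := (-p.1, aShift k p.1 + p.2)
  invFun p := (-p.1, p.2 - aShift k (-p.1))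
  left_inv p := by simp
  right_inv p := by simp

/-- Left multiplication by `b` on the normal forms `b ^ j * a ^ i`, in the coordinates `(j, i)`. -/
def permB (k : ℕ) : Equiv.Perm (Point k) :=
  (Equiv.addRight 1).prodCongr (Equiv.refl _)

@[simp] theorem permA_apply (k : ℕ) (j : Fin 4) (i : ZMod (8 * k + 8)) :
    permA k (j, i) = (-j, aShift k j + i) := rfl

@[simp] theorem permB_apply (k : ℕ) (j : Fin 4) (i : ZMod (8 * k + 8)) :
    permB k (j, i) = (j + 1, i) := rfl

theorem permA_pow_two_mul_apply (k t : ℕ) (j : Fin 4) (i : ZMod (8 * k + 8)) :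
    (permA k ^ (2 * t)) (j, i) = (j, i + t * (aShift k j + aShift k (-j))) := by
  induction t with
  | zero => simp
  | succ t ih =>
    rw [mul_add_one, add_comm, pow_add, Equiv.Perm.mul_apply, ih, sq, Equiv.Perm.mul_apply]
    simp only [permA_apply, neg_neg, Prod.mk.injEq, true_and]
    push_cast
    ring

theorem permA_pow_half_apply (k : ℕ) (j : Fin 4) (i : ZMod (8 * k + 8)) :
    (permA k ^ (4 * k + 4)) (j, i) = (j, i + (4 * k + 4)) := by
  rw [show 4 * k + 4 = 2 * (2 * k + 2) by ring, permA_pow_two_mul_apply]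
  push_cast
  rw [two_mul_aShift_add_aShift_neg]

theorem permA_pow_card (k : ℕ) : permA k ^ (8 * k + 8) = 1 := by
  have h : permA k ^ (4 * k + 4) * permA k ^ (4 * k + 4) = 1 := by
    refine Equiv.ext fun ⟨j, i⟩ => ?_
    rw [Equiv.Perm.mul_apply, permA_pow_half_apply, permA_pow_half_apply, Equiv.Perm.one_apply,
      Prod.mk.injEq]
    exact ⟨rfl, by linear_combination natCast_self k⟩
  rwa [← pow_add, show 4 * k + 4 + (4 * k + 4) = 8 * k + 8 by ring] at h

theorem permB_pow_four (k : ℕ) : permB k ^ 4 = 1 := by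
  refine Equiv.ext fun ⟨j, i⟩ => ?_
  simp only [pow_succ, pow_zero, one_mul, Equiv.Perm.mul_apply, permB_apply, Equiv.Perm.one_apply]
  fin_cases j <;> rfl

theorem permA_mul_permB_sq (k : ℕ) : (permA k * permB k) ^ 2 = 1 := by
  refine Equiv.ext fun ⟨j, i⟩ => ?_
  have hj : -(j + 1) + 1 = -j := by abel
  simp only [sq, Equiv.Perm.mul_apply, permA_apply, permB_apply, Equiv.Perm.one_apply, hj,
    neg_neg, Prod.mk.injEq, true_and]
  linear_combination aShift_add_one_add_aShift_neg k j

theorem permB_sq_mul_permA_mul_permB_sq (k : ℕ) :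
    permB k ^ 2 * permA k * permB k ^ 2 = permA k ^ (4 * k + 5) := by
  refine Equiv.ext fun ⟨j, i⟩ => ?_
  rw [show 4 * k + 5 = 4 * k + 4 + 1 by ring, pow_succ' (permA k)]
  have hj : j + 1 + 1 = j + 2 := by abel
  simp only [sq, Equiv.Perm.mul_apply, permA_pow_half_apply, permA_apply, permB_apply, hj,
    aShift_add_two, Prod.mk.injEq]
  exact ⟨by abel, by ring⟩

def toPerm (k : ℕ) : PresentedGroup (kRels (4 * k + 3)) →* Equiv.Perm (Point k) :=
  PresentedGroup.toGroup (f := ![permA k, permB k]) <| by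
    rintro r (rfl | rfl | rfl | rfl)
    · simpa [show 2 * (4 * k + 3) + 2 = 8 * k + 8 by ring] using permA_pow_card k
    · simpa using permB_pow_four k
    · simpa using permA_mul_permB_sq k
    · simpa [mul_inv_eq_one] using permB_sq_mul_permA_mul_permB_sq k

theorem toPerm_of_zero (k : ℕ) : toPerm k (PresentedGroup.of 0) = permA k :=
  PresentedGroup.toGroup.of _

theorem toPerm_of_one (k : ℕ) : toPerm k (PresentedGroup.of 1) = permB k :=
  PresentedGroup.toGroup.of _

theorem permA_pow_apply_zero (k t : ℕ) (i : ZMod (8 * k + 8)) :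
    (permA k ^ t) (0, i) = (0, t + i) := by
  induction t with
  | zero => simp
  | succ t ih =>
    rw [pow_succ', Equiv.Perm.mul_apply, ih, permA_apply, neg_zero, Prod.mk.injEq]
    exact ⟨rfl, by push_cast [aShift, Matrix.cons_val_zero]; ring⟩

theorem permB_pow_val_apply_zero (k : ℕ) (j : Fin 4) (i : ZMod (8 * k + 8)) :
    (permB k ^ (j : ℕ)) (0, i) = (j, i) := by
  fin_cases j <;> simp [pow_succ]

def normalForm {G : Type*} [Group G] {n : ℕ} (a b : G) (p : Fin 4 × ZMod n) : G :=
  b ^ (p.1 : ℕ) * a ^ p.2.val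

section Relations

variable {G : Type*} [Group G] {a b : G} {k : ℕ}

theorem mul_eq_pow_three_mul_pow (ha : a ^ (8 * k + 8) = 1) (hb : b ^ 4 = 1)
    (hab : (a * b) ^ 2 = 1) : a * b = b ^ 3 * a ^ (8 * k + 7) := by
  rw [eq_inv_of_mul_eq_one_left (a := b ^ 3) (by rw [← pow_succ, hb]),
    eq_inv_of_mul_eq_one_left (a := a ^ (8 * k + 7)) (by rw [← pow_succ, ha]), ← mul_inv_rev]
  exact (inv_eq_of_mul_eq_one_right (by rw [← sq, hab])).symm

theorem mul_sq_eq (hb : b ^ 4 = 1) (hbab : b ^ 2 * a * b ^ 2 = a ^ (4 * k + 5)) :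
    a * b ^ 2 = b ^ 2 * a ^ (4 * k + 5) := by
  rw [← hbab, ← mul_assoc, ← mul_assoc, ← pow_add, hb, one_mul]

theorem mul_pow_three_eq (ha : a ^ (8 * k + 8) = 1) (hb : b ^ 4 = 1) (hab : (a * b) ^ 2 = 1)
    (hbab : b ^ 2 * a * b ^ 2 = a ^ (4 * k + 5)) : a * b ^ 3 = b * a ^ (4 * k + 3) := by
  have hb3 : b ^ 3 = b⁻¹ := eq_inv_of_mul_eq_one_left (by rw [← pow_succ, hb])
  have hab' : (a * b)⁻¹ = a * b := inv_eq_of_mul_eq_one_right (by rw [← sq, hab])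
  have ha' : a ^ (4 * k + 3) = (a ^ (4 * k + 5))⁻¹ :=
    eq_inv_of_mul_eq_one_left (by rw [← pow_add, ← ha]; ring_nf)
  rw [ha', ← hbab, hb3]
  calc a * b⁻¹ = (a * b)⁻¹ * b⁻¹ * b⁻¹ := by rw [hab']; group
    _ = b * (b ^ 2 * a * b ^ 2)⁻¹ := by group

theorem mul_pow_eq_pow_mul_pow_aShift (ha : a ^ (8 * k + 8) = 1) (hb : b ^ 4 = 1)
    (hab : (a * b) ^ 2 = 1) (hbab : b ^ 2 * a * b ^ 2 = a ^ (4 * k + 5)) (j : Fin 4) :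
    a * b ^ (j : ℕ) = b ^ ((-j : Fin 4) : ℕ) * a ^ aShift k j := by
  fin_cases j <;> simp [aShift, Fin.neg_def, mul_eq_pow_three_mul_pow ha hb hab,
    mul_sq_eq hb hbab, mul_pow_three_eq ha hb hab hbab]

theorem normalForm_permA (ha : a ^ (8 * k + 8) = 1) (hb : b ^ 4 = 1) (hab : (a * b) ^ 2 = 1)
    (hbab : b ^ 2 * a * b ^ 2 = a ^ (4 * k + 5)) (p : Point k) :
    normalForm a b (permA k p) = a * normalForm a b p := by
  rw [normalForm, normalForm, permA_apply, pow_val_natCast_add ha, ← mul_assoc,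
    ← mul_pow_eq_pow_mul_pow_aShift ha hb hab hbab, mul_assoc]

theorem normalForm_permB (hb : b ^ 4 = 1) (p : Point k) :
    normalForm a b (permB k p) = b * normalForm a b p := by
  rw [normalForm, normalForm, permB_apply, Fin.val_add, ← pow_eq_pow_mod _ hb, Fin.val_one,
    pow_succ', mul_assoc]

end Relations

section PresentedGroup

variable {k : ℕ}

local notation "a" => (PresentedGroup.of 0 : PresentedGroup (kRels (4 * k + 3)))
local notation "b" => (PresentedGroup.of 1 : PresentedGroup (kRels (4 * k + 3)))

theorem of_zero_pow : a ^ (8 * k + 8) = 1 := by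
  have h := PresentedGroup.one_of_mem (rels := kRels (4 * k + 3))
    (x := FreeGroup.of 0 ^ (2 * (4 * k + 3) + 2)) (by simp [kRels])
  rwa [map_pow, show 2 * (4 * k + 3) + 2 = 8 * k + 8 by ring] at h

theorem of_one_pow : b ^ 4 = 1 := by
  have h := PresentedGroup.one_of_mem (rels := kRels (4 * k + 3))
    (x := FreeGroup.of 1 ^ 4) (by simp [kRels])
  rwa [map_pow] at h

theorem of_zero_mul_of_one_sq : (a * b) ^ 2 = 1 := by
  have h := PresentedGroup.one_of_mem (rels := kRels (4 * k + 3))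
    (x := (FreeGroup.of 0 * FreeGroup.of 1) ^ 2) (by simp [kRels])
  rwa [map_pow, map_mul] at h

theorem of_one_sq_mul_of_zero_mul_of_one_sq : b ^ 2 * a * b ^ 2 = a ^ (4 * k + 5) := by
  have h := PresentedGroup.one_of_mem (rels := kRels (4 * k + 3))
    (x := FreeGroup.of 1 ^ 2 * FreeGroup.of 0 * FreeGroup.of 1 ^ 2 *
      (FreeGroup.of 0 ^ (4 * k + 3 + 2))⁻¹) (by simp [kRels])
  rwa [map_mul, map_inv, mul_inv_eq_one, map_mul, map_mul, map_pow, map_pow,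
    show 4 * k + 3 + 2 = 4 * k + 5 by ring] at h

theorem normalForm_toPerm_of (x : Fin 2) (p : Point k) :
    normalForm a b (toPerm k (.of x) p) = .of x * normalForm a b p := by
  fin_cases x
  · exact normalForm_permA of_zero_pow of_one_pow of_zero_mul_of_one_sq
      of_one_sq_mul_of_zero_mul_of_one_sq p
  · exact normalForm_permB of_one_pow p

theorem toPerm_normalForm (p : Point k) : toPerm k (normalForm a b p) (0, 0) = p := by
  obtain ⟨j, i⟩ := p
  rw [normalForm, map_mul, map_pow, map_pow, Equiv.Perm.mul_apply, toPerm_of_zero, toPerm_of_one,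
    permA_pow_apply_zero, add_zero, ZMod.natCast_zmod_val, permB_pow_val_apply_zero]

end PresentedGroup

end Kulkarni

open Kulkarni in
/-- The Kulkarni group `K_g` has order `8g + 8` for every `g ≡ 3 (mod 4)`. -/
theorem kulkarni_group_card (g : ℕ) (hg : g % 4 = 3) :
    Nat.card (PresentedGroup (kRels g)) = 8 * g + 8 := by
  obtain ⟨k, rfl⟩ : ∃ k, g = 4 * k + 3 := ⟨g / 4, by omega⟩
  rw [card_eq_card_of_normalForm (toPerm k) (normalForm (.of 0) (.of 1))
    (PresentedGroup.closure_range_of _) (by rintro _ ⟨x, rfl⟩; exact normalForm_toPerm_of x)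
    (0, 0) (by simp [normalForm]) toPerm_normalForm, Nat.card_prod, Nat.card_fin, Nat.card_zmod]
  ring
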